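/- arXiv:1307.3283 — 2 statements merged into one kernel-verified Lean document; each statement's English description precedes it below -/
import Mathlib

section
/- Let (Ω, F, μ) be a probability space, and let X : Ω → ℝⁿ, X̂ : Ω → ℝⁿ, and S : Ω → ℝⁿ be square-integrable random vectors with E[(X − X̂) Sᵀ] = Iₙ and J := E[S Sᵀ] positive definite. Then the scalar mean square error satisfies E‖X − X̂‖² ≥ tr(J⁻¹), where ‖·‖ is the Euclidean norm and tr is the matrix trace. -/
/-!
With `e = X - X̂`, `A = J⁻¹` and the linear estimate `T = A S` of the error, the score identity
gives `E[e Tᵀ] = Aᵀ` and `E[T Tᵀ] = A J Aᵀ = Aᵀ`. Expanding `0 ≤ E (eᵢ - Tᵢ)²` therefore yields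
`E eᵢ² ≥ 2 Aᵢᵢ - Aᵢᵢ = Aᵢᵢ`, and summing over `i` gives `E‖e‖² ≥ tr A`.
-/

open MeasureTheory Matrix

section SecondMoments

variable {Ω ι κ : Type*} [MeasurableSpace Ω] {μ : Measure Ω}

/-- The matrix `E[U Vᵀ]`. -/
noncomputable def secondMomentMatrix (μ : Measure Ω) (U : Ω → ι → ℝ) (V : Ω → κ → ℝ) :
    Matrix ι κ ℝ :=
  Matrix.of fun i j => ∫ ω, U ω i * V ω j ∂μ

lemma secondMomentMatrix_apply (U : Ω → ι → ℝ) (V : Ω → κ → ℝ) (i : ι) (j : κ) :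
    secondMomentMatrix μ U V i j = ∫ ω, U ω i * V ω j ∂μ :=
  rfl

variable [Fintype ι] [Fintype κ]

lemma MeasureTheory.MemLp.mulVec {p : ENNReal} {V : Ω → κ → ℝ} (hV : MemLp V p μ)
    (A : Matrix ι κ ℝ) : MemLp (fun ω => A *ᵥ V ω) p μ :=
  memLp_pi_iff.2 fun i => memLp_finsetSum _ fun k _ => (hV.eval k).const_mul (A i k)

lemma secondMomentMatrix_mulVec_right {U : Ω → ι → ℝ} {V : Ω → κ → ℝ}
    (hU : MemLp U 2 μ) (hV : MemLp V 2 μ) {κ' : Type*} (A : Matrix κ' κ ℝ) :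
    secondMomentMatrix μ U (fun ω => A *ᵥ V ω) = secondMomentMatrix μ U V * Aᵀ := by
  ext i j
  have hUV k : Integrable (fun ω => U ω i * V ω k) μ := (hU.eval i).integrable_mul (hV.eval k)
  calc ∫ ω, U ω i * (A *ᵥ V ω) j ∂μ = ∫ ω, ∑ k, (U ω i * V ω k) * A j k ∂μ := by
        simp only [mulVec, dotProduct, Finset.mul_sum, mul_left_comm, mul_comm]
    _ = ∑ k, (∫ ω, U ω i * V ω k ∂μ) * A j k := by
        rw [integral_finsetSum _ fun k _ => (hUV k).mul_const _]
        simp only [integral_mul_const]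

lemma secondMomentMatrix_mulVec_left {U : Ω → ι → ℝ} {V : Ω → κ → ℝ}
    (hU : MemLp U 2 μ) (hV : MemLp V 2 μ) {ι' : Type*} (A : Matrix ι' ι ℝ) :
    secondMomentMatrix μ (fun ω => A *ᵥ U ω) V = A * secondMomentMatrix μ U V := by
  ext i j
  have hUV k : Integrable (fun ω => U ω k * V ω j) μ := (hU.eval k).integrable_mul (hV.eval j)
  calc ∫ ω, (A *ᵥ U ω) i * V ω j ∂μ = ∫ ω, ∑ k, A i k * (U ω k * V ω j) ∂μ := by
        simp only [mulVec, dotProduct, Finset.sum_mul, mul_assoc]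
    _ = ∑ k, A i k * ∫ ω, U ω k * V ω j ∂μ := by
        rw [integral_finsetSum _ fun k _ => (hUV k).const_mul _]
        simp only [integral_const_mul]

lemma two_mul_integral_mul_sub_integral_mul_self_le {f g : Ω → ℝ}
    (hf : MemLp f 2 μ) (hg : MemLp g 2 μ) :
    2 * ∫ ω, f ω * g ω ∂μ - ∫ ω, g ω * g ω ∂μ ≤ ∫ ω, f ω * f ω ∂μ := by
  have hfg : Integrable (fun ω => 2 * (f ω * g ω)) μ := (hf.integrable_mul hg).const_mul 2
  have hgg : Integrable (fun ω => g ω * g ω) μ := hg.integrable_mul hg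
  rw [← integral_const_mul, ← integral_sub hfg hgg]
  exact integral_mono (hfg.sub hgg) (hf.integrable_mul hf) fun ω => by
    nlinarith [sq_nonneg (f ω - g ω)]

lemma two_mul_trace_sub_trace_le_trace_secondMomentMatrix {U V : Ω → ι → ℝ}
    (hU : MemLp U 2 μ) (hV : MemLp V 2 μ) :
    2 * trace (secondMomentMatrix μ U V) - trace (secondMomentMatrix μ V V) ≤
      trace (secondMomentMatrix μ U U) := by
  simp only [trace, diag, secondMomentMatrix_apply, Finset.mul_sum, ← Finset.sum_sub_distrib]
  exact Finset.sum_le_sum fun i _ =>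
    two_mul_integral_mul_sub_integral_mul_self_le (hU.eval i) (hV.eval i)

lemma integral_norm_sq_eq_trace_secondMomentMatrix {V : Ω → EuclideanSpace ℝ ι}
    (hV : MemLp V 2 μ) :
    ∫ ω, ‖V ω‖ ^ 2 ∂μ =
      trace (secondMomentMatrix μ (fun ω => (V ω).ofLp) (fun ω => (V ω).ofLp)) := by
  simp only [EuclideanSpace.norm_sq_eq, Real.norm_eq_abs, sq_abs]
  simp only [sq, trace, diag, secondMomentMatrix_apply]
  exact integral_finsetSum _ fun i _ => (hV.eval_piLp i).integrable_mul (hV.eval_piLp i)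

theorem trace_le_trace_secondMomentMatrix_of_mul_eq_one [DecidableEq ι] {E S : Ω → ι → ℝ}
    (hE : MemLp E 2 μ) (hS : MemLp S 2 μ) (hES : secondMomentMatrix μ E S = 1)
    {A : Matrix ι ι ℝ} (hA : A * secondMomentMatrix μ S S = 1) :
    trace A ≤ trace (secondMomentMatrix μ E E) := by
  have hAS := hS.mulVec A
  have hET : secondMomentMatrix μ E (fun ω => A *ᵥ S ω) = Aᵀ := by
    rw [secondMomentMatrix_mulVec_right hE hS, hES, one_mul]
  have hTT : secondMomentMatrix μ (fun ω => A *ᵥ S ω) (fun ω => A *ᵥ S ω) = Aᵀ := by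
    rw [secondMomentMatrix_mulVec_left hS hAS, secondMomentMatrix_mulVec_right hS hS,
      ← Matrix.mul_assoc, hA, one_mul]
  have := two_mul_trace_sub_trace_le_trace_secondMomentMatrix hE hAS
  rw [hET, hTT, trace_transpose] at this
  linarith

end SecondMoments

theorem posterior_cramer_rao_scalar_bound_general {n : ℕ} {Ω : Type*} [MeasurableSpace Ω]
    (μ : Measure Ω)
    (X Xhat S : Ω → EuclideanSpace ℝ (Fin n))
    (hX : MemLp X 2 μ) (hXhat : MemLp Xhat 2 μ) (hS : MemLp S 2 μ)
    (hscore : ∀ i j,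
      (∫ ω, (X ω i - Xhat ω i) * S ω j ∂μ) = (1 : Matrix (Fin n) (Fin n) ℝ) i j)
    (J : Matrix (Fin n) (Fin n) ℝ)
    (hJ : ∀ i j, J i j = ∫ ω, S ω i * S ω j ∂μ)
    (hJpd : J.PosDef) :
    (∫ ω, ‖X ω - Xhat ω‖ ^ 2 ∂μ) ≥ Matrix.trace J⁻¹ := by
  have he : MemLp (fun ω => (X ω - Xhat ω).ofLp) 2 μ :=
    memLp_pi_iff.2 (memLp_piLp_iff.1 (hX.sub hXhat))
  have hs : MemLp (fun ω => (S ω).ofLp) 2 μ := memLp_pi_iff.2 (memLp_piLp_iff.1 hS)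
  have hes : secondMomentMatrix μ (fun ω => (X ω - Xhat ω).ofLp) (fun ω => (S ω).ofLp) = 1 :=
    Matrix.ext hscore
  have hJs : J = secondMomentMatrix μ (fun ω => (S ω).ofLp) (fun ω => (S ω).ofLp) :=
    Matrix.ext hJ
  have hJinv : J⁻¹ * J = 1 := nonsing_inv_mul J ((isUnit_iff_isUnit_det J).1 hJpd.isUnit)
  rw [ge_iff_le, integral_norm_sq_eq_trace_secondMomentMatrix (V := fun ω => X ω - Xhat ω)
    (hX.sub hXhat)]
  exact trace_le_trace_secondMomentMatrix_of_mul_eq_one he hs hes (hJs ▸ hJinv)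

/-- Scalar posterior Cramér–Rao lower bound (eq. (3)): under the score identity
`E[(X - X̂) Sᵀ] = Iₙ` and positive definiteness of `J = E[S Sᵀ]`, the scalar mean
square error satisfies `E‖X - X̂‖² ≥ tr(J⁻¹)`. -/
theorem posterior_cramer_rao_scalar_bound {n : ℕ} {Ω : Type*} [MeasurableSpace Ω]
    (μ : Measure Ω) [IsProbabilityMeasure μ]
    (X Xhat S : Ω → EuclideanSpace ℝ (Fin n))
    (hX : MemLp X 2 μ) (hXhat : MemLp Xhat 2 μ) (hS : MemLp S 2 μ)
    (hscore : ∀ i j,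
      (∫ ω, (X ω i - Xhat ω i) * S ω j ∂μ) = (1 : Matrix (Fin n) (Fin n) ℝ) i j)
    (J : Matrix (Fin n) (Fin n) ℝ)
    (hJ : ∀ i j, J i j = ∫ ω, S ω i * S ω j ∂μ)
    (hJpd : J.PosDef) :
    (∫ ω, ‖X ω - Xhat ω‖ ^ 2 ∂μ) ≥ Matrix.trace J⁻¹ :=
  posterior_cramer_rao_scalar_bound_general μ X Xhat S hX hXhat hS hscore J hJ hJpd
end

section
/- Let f : ℝⁿ → ℝⁿ be twice differentiable at x ∈ ℝⁿ, let A be a symmetric real n×n matrix, c ∈ ℝ, and define L : ℝⁿ × ℝⁿ → ℝ by L(x, y) = c − (1/2) ⟨y − f(x), A (y − f(x))⟩. Let μ be a probability measure on ℝⁿ such that the identity map is Bochner integrable with barycenter ∫ y dμ(y) = f(x). Then for all h, k ∈ ℝⁿ, ∫ ( −D²ₓL(x, y) )(h, k) dμ(y) = ⟨Df(x) h, A (Df(x) k)⟩, where D²ₓL(x, y) denotes the second Fréchet derivative of L(·, y) at x. -/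
/-!
Differentiating `z ↦ c - ½⟪y - f z, A (y - f z)⟫` twice (with `A` symmetric) gives
`(h, k) ↦ -⟪A (Df h), Df k⟫ + ⟪A (y - f x), D²f h k⟫`. The second term is a continuous
linear function of the residual `y - f x`, so it integrates to zero against any law whose
barycenter is `f x`, leaving the deterministic first term.
-/

open MeasureTheory RealInnerProductSpace Filter Topology

theorem ContinuousLinearMap.integral_comp_sub_integral_id {E F : Type*}
    [NormedAddCommGroup E] [NormedSpace ℝ E] [CompleteSpace E] [NormedAddCommGroup F]
    [NormedSpace ℝ F] [CompleteSpace F] [MeasurableSpace E] {μ : Measure E}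
    [IsProbabilityMeasure μ]
    (φ : E →L[ℝ] F) (hid : Integrable (fun y => y) μ) :
    ∫ y, φ (y - ∫ z, z ∂μ) ∂μ = 0 := by
  have hres : Integrable (fun y => y - ∫ z, z ∂μ) μ := hid.sub (integrable_const _)
  rw [φ.integral_comp_comm hres, integral_sub hid (integrable_const _),
    integral_const, probReal_univ, one_smul, sub_self, map_zero]

section

variable {E : Type*} [NormedAddCommGroup E] [InnerProductSpace ℝ E]

theorem HasFDerivAt.const_sub_half_inner_sub_symmetric {A : E →L[ℝ] E}
    (hA : (A : E →ₗ[ℝ] E).IsSymmetric) {f : E → E} {f' : E →L[ℝ] E} {z : E}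
    (hf : HasFDerivAt f f' z) (c : ℝ) (y : E) :
    HasFDerivAt (fun z => c - 1 / 2 * ⟪y - f z, A (y - f z)⟫)
      ((innerSL ℝ (A (y - f z))).comp f') z := by
  have hres : HasFDerivAt (fun z => y - f z) (-f') z := hf.const_sub y
  refine (((hres.inner ℝ (A.hasFDerivAt.comp z hres)).const_mul (1 / 2 : ℝ)).const_sub
    c).congr_fderiv ?_
  ext v
  have hAv : ⟪y - f z, A (f' v)⟫ = ⟪A (y - f z), f' v⟫ := (hA _ _).symm
  simp only [ContinuousLinearMap.coe_comp, Function.comp_apply, innerSL_apply_apply, neg_apply,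
    smul_apply, fderivInnerCLM_apply, ContinuousLinearMap.prod_apply, map_neg, smul_eq_mul,
    inner_neg_left, inner_neg_right, hAv, real_inner_comm (f' v)]
  ring

theorem fderiv_fderiv_const_sub_half_inner_sub_symmetric_apply {A : E →L[ℝ] E}
    (hA : (A : E →ₗ[ℝ] E).IsSymmetric) {f : E → E} {x : E}
    (hf : ∀ᶠ z in 𝓝 x, DifferentiableAt ℝ f z) (hf' : DifferentiableAt ℝ (fderiv ℝ f) x)
    (c : ℝ) (y h k : E) :
    fderiv ℝ (fderiv ℝ fun z => c - 1 / 2 * ⟪y - f z, A (y - f z)⟫) x h k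
      = -⟪A (fderiv ℝ f x h), fderiv ℝ f x k⟫ + ⟪A (y - f x), fderiv ℝ (fderiv ℝ f) x h k⟫ := by
  have hgrad : fderiv ℝ (fun z => c - 1 / 2 * ⟪y - f z, A (y - f z)⟫)
      =ᶠ[𝓝 x] fun z => (innerSL ℝ (A (y - f z))).comp (fderiv ℝ f z) := by
    filter_upwards [hf] with z hz
    exact (hz.hasFDerivAt.const_sub_half_inner_sub_symmetric hA c y).fderiv
  have hcoef : HasFDerivAt (fun z => innerSL ℝ (A (y - f z)))
      (((innerSL ℝ).comp A).comp (-fderiv ℝ f x)) x :=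
    ((innerSL ℝ).comp A).hasFDerivAt.comp x (hf.self_of_nhds.hasFDerivAt.const_sub y)
  rw [hgrad.fderiv_eq, (hcoef.clm_comp hf'.hasFDerivAt).fderiv]
  simp only [add_apply, ContinuousLinearMap.coe_comp, Function.comp_apply,
    ContinuousLinearMap.compL_apply, ContinuousLinearMap.flip_apply, neg_apply, map_neg,
    innerSL_apply_apply]
  ring

theorem integral_neg_fderiv_fderiv_const_sub_half_inner_sub_symmetric_apply
    [CompleteSpace E] [MeasurableSpace E] {A : E →L[ℝ] E} (hA : (A : E →ₗ[ℝ] E).IsSymmetric)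
    {f : E → E} {x : E}
    (hf : ∀ᶠ z in 𝓝 x, DifferentiableAt ℝ f z) (hf' : DifferentiableAt ℝ (fderiv ℝ f) x)
    (c : ℝ) {μ : Measure E} [IsProbabilityMeasure μ] (hid : Integrable (fun y => y) μ)
    (hbar : ∫ y, y ∂μ = f x) (h k : E) :
    ∫ y, -fderiv ℝ (fderiv ℝ fun z => c - 1 / 2 * ⟪y - f z, A (y - f z)⟫) x h k ∂μ
      = ⟪fderiv ℝ f x h, A (fderiv ℝ f x k)⟫ := by
  set φ : E →L[ℝ] ℝ := ((innerSL ℝ).flip (fderiv ℝ (fderiv ℝ f) x h k)).comp A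
  have hpointwise : ∀ y,
      -fderiv ℝ (fderiv ℝ fun z => c - 1 / 2 * ⟪y - f z, A (y - f z)⟫) x h k
        = ⟪fderiv ℝ f x h, A (fderiv ℝ f x k)⟫ - φ (y - f x) := by
    intro y
    have hAsymm : ⟪A (fderiv ℝ f x h), fderiv ℝ f x k⟫ = ⟪fderiv ℝ f x h, A (fderiv ℝ f x k)⟫ :=
      hA _ _
    rw [fderiv_fderiv_const_sub_half_inner_sub_symmetric_apply hA hf hf', hAsymm]
    simp only [φ, ContinuousLinearMap.coe_comp, Function.comp_apply,
      ContinuousLinearMap.flip_apply, innerSL_apply_apply]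
    ring
  have hresidual : ∫ y, φ (y - f x) ∂μ = 0 := hbar ▸ φ.integral_comp_sub_integral_id hid
  have hint : Integrable (fun y => φ (y - f x)) μ :=
    φ.integrable_comp (hid.sub (integrable_const (f x)) :)
  simp only [hpointwise]
  rw [integral_sub (integrable_const _) hint, hresidual, integral_const, probReal_univ,
    one_smul, sub_zero]

end

/-- Key step (29c)-(29d) in the proof of Lemma 8: for the Gaussian transition
log-density `L(x,y) = c - (1/2)⟨y - f(x), A(y - f(x))⟩` with `A` symmetric and `f`
twice differentiable at `x`, if `μ` is a probability measure on `ℝⁿ` with barycenter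
`∫ y dμ(y) = f(x)`, then `∫ (-D²ₓL(x,y))(h,k) dμ(y) = ⟨Df(x)h, A(Df(x)k)⟩`. -/
theorem expected_neg_hessian_gaussian_log_density {n : ℕ}
    (f : EuclideanSpace ℝ (Fin n) → EuclideanSpace ℝ (Fin n))
    (x : EuclideanSpace ℝ (Fin n))
    (hf : ∀ᶠ z in nhds x, DifferentiableAt ℝ f z)
    (hf' : DifferentiableAt ℝ (fderiv ℝ f) x)
    (A : Matrix (Fin n) (Fin n) ℝ) (hA : A.IsSymm) (c : ℝ)
    (L : EuclideanSpace ℝ (Fin n) → EuclideanSpace ℝ (Fin n) → ℝ)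
    (hL : ∀ z y, L z y = c - (1 / 2) * ⟪y - f z, Matrix.toEuclideanLin A (y - f z)⟫)
    (μ : Measure (EuclideanSpace ℝ (Fin n))) [IsProbabilityMeasure μ]
    (hid : Integrable (fun y => y) μ)
    (hbar : (∫ y, y ∂μ) = f x) :
    ∀ h k : EuclideanSpace ℝ (Fin n),
      (∫ y, -(fderiv ℝ (fderiv ℝ (fun z => L z y)) x h k) ∂μ)
        = ⟪fderiv ℝ f x h, Matrix.toEuclideanLin A (fderiv ℝ f x k)⟫ := by
  have hsymm : (Matrix.toEuclideanLin A).IsSymmetric :=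
    Matrix.isSymmetric_toEuclideanLin_iff.2 (Matrix.isHermitian_iff_isSymm.2 hA)
  intro h k
  simp only [hL]
  exact integral_neg_fderiv_fderiv_const_sub_half_inner_sub_symmetric_apply
    (A := Matrix.toEuclideanCLM (𝕜 := ℝ) A) hsymm hf hf' c hid hbar h k
end
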